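/- Let λ > 0. Then (λ, y) is a solution of the four-variable system (S) if and only if (λ, z) is a solution of system (SZ), where z_n = y_n, z_{n+m} = y_{n+m} + (2m−2)λ, z_1 = y_1 + (m−1)λ, z_{n+1} = y_{n+1} + (m−1)λ. Consequently, a positive real number λ is an eigenvalue of (S) if and only if it is an eigenvalue of (SZ). -/
import Mathlib


open Finset

/-- The four-variable system (S), with variables `y1 = y_1`, `yn = y_n`,
`yn1 = y_{n+1}`, `ynm = y_{n+m}`. -/
def Ssol (n m : ℕ) (a : ℕ → ℝ) (lam y1 yn yn1 ynm : ℝ) : Prop :=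
  yn = min ((1 - (a n + a (n + m))) - 2 * lam + y1 + yn1 - ynm)
      ((∑ i ∈ Finset.Icc 1 (n - 1), a i) - ((n : ℝ) - 1) * lam + y1) ∧
  ynm = min ((1 - (a n + a (n + m))) - lam + y1 + yn1 - yn)
      ((∑ i ∈ Finset.Icc (n + 1) (n + m - 1), a i) - ((m : ℝ) - 1) * lam + yn1) ∧
  y1 = min (a n - lam + (yn + ynm) / 2)
      ((∑ i ∈ Finset.Icc 1 (n - 1), (1 - a i)) - ((n : ℝ) - 1) * lam + yn) ∧
  yn1 = min (a (n + m) - lam + (yn + ynm) / 2)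
      ((∑ i ∈ Finset.Icc (n + 1) (n + m - 1), (1 - a i)) - ((m : ℝ) - 1) * lam + ynm)

/-- The system (SZ), with variables `z1 = z_1`, `zn = z_n`,
`zn1 = z_{n+1}`, `znm = z_{n+m}`. -/
def SZsol (n m : ℕ) (a : ℕ → ℝ) (lam z1 zn zn1 znm : ℝ) : Prop :=
  zn = min ((1 - (a n + a (n + m))) - (∑ i ∈ Finset.Icc (n + 1) (n + m - 1), a i)
        - 2 * lam + z1)
      ((∑ i ∈ Finset.Icc 1 (n - 1), a i) - ((n : ℝ) + (m : ℝ) - 2) * lam + z1) ∧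
  znm = (∑ i ∈ Finset.Icc (n + 1) (n + m - 1), a i) + zn1 ∧
  z1 = min (a n - lam + (zn + znm) / 2)
      ((∑ i ∈ Finset.Icc 1 (n - 1), (1 - a i)) - ((n : ℝ) - (m : ℝ)) * lam + zn) ∧
  zn1 = min (a (n + m) - lam + (zn + znm) / 2)
      ((∑ i ∈ Finset.Icc (n + 1) (n + m - 1), (1 - a i)) - (2 * (m : ℝ) - 2) * lam + znm)

theorem stmt14 (n m : ℕ) (hn : 2 ≤ n) (hm : 2 ≤ m) (a : ℕ → ℝ)
    (ha : ∀ i : ℕ, 1 ≤ i → i ≤ n + m → 0 ≤ a i ∧ a i ≤ 1)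
    (hprio : a n + a (n + m) ≤ 1)
    (lam : ℝ) (hlam : 0 < lam) :
    (∀ y1 yn yn1 ynm : ℝ,
      Ssol n m a lam y1 yn yn1 ynm ↔
        SZsol n m a lam (y1 + ((m : ℝ) - 1) * lam) yn (yn1 + ((m : ℝ) - 1) * lam)
          (ynm + (2 * (m : ℝ) - 2) * lam)) ∧
    ((∃ y1 yn yn1 ynm : ℝ, Ssol n m a lam y1 yn yn1 ynm) ↔
      (∃ z1 zn zn1 znm : ℝ, SZsol n m a lam z1 zn zn1 znm)) := by
  have main : ∀ y1 yn yn1 ynm : ℝ,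
      Ssol n m a lam y1 yn yn1 ynm ↔
        SZsol n m a lam (y1 + ((m : ℝ) - 1) * lam) yn (yn1 + ((m : ℝ) - 1) * lam)
          (ynm + (2 * (m : ℝ) - 2) * lam) := by
    intro y1 yn yn1 ynm
    unfold Ssol SZsol
    set A := (1 : ℝ) - (a n + a (n + m)) with hA
    set Bn := ∑ i ∈ Finset.Icc 1 (n - 1), a i with hBn
    set Bm := ∑ i ∈ Finset.Icc (n + 1) (n + m - 1), a i with hBm
    set Cn := ∑ i ∈ Finset.Icc 1 (n - 1), (1 - a i) with hCn
    set Cm := ∑ i ∈ Finset.Icc (n + 1) (n + m - 1), (1 - a i) with hCm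
    constructor
    · rintro ⟨h1, h2, h3, h4⟩
      have hl : yn ≤ A - 2 * lam + y1 + yn1 - ynm := by
        rw [h1]; exact min_le_left _ _
      have key : ynm = Bm - ((m : ℝ) - 1) * lam + yn1 := by
        rcases le_total (A - lam + y1 + yn1 - yn) (Bm - ((m : ℝ) - 1) * lam + yn1)
          with h | h
        · rw [min_eq_left h] at h2; linarith
        · rw [min_eq_right h] at h2; exact h2
      refine ⟨?_, by linarith, ?_, ?_⟩
      · rw [h1]; congr 1 <;> linarith
      · rw [h3, ← min_add_add_right]; congr 1 <;> ring
      · rw [h4, ← min_add_add_right]; congr 1 <;> ring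
    · rintro ⟨g1, g2, g3, g4⟩
      have key : ynm = Bm - ((m : ℝ) - 1) * lam + yn1 := by linarith
      have hl : yn ≤ A - Bm - 2 * lam + (y1 + ((m : ℝ) - 1) * lam) := by
        rw [g1]; exact min_le_left _ _
      refine ⟨?_, ?_, ?_, ?_⟩
      · rw [g1]; congr 1 <;> linarith
      · rw [min_eq_right (by linarith)]; exact key
      · have h' : y1 + ((m : ℝ) - 1) * lam =
            min (a n - lam + (yn + ynm) / 2 + ((m : ℝ) - 1) * lam)
              (Cn - ((n : ℝ) - 1) * lam + yn + ((m : ℝ) - 1) * lam) := by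
          rw [g3]; congr 1 <;> ring
        rw [min_add_add_right] at h'
        exact add_right_cancel h'
      · have h' : yn1 + ((m : ℝ) - 1) * lam =
            min (a (n + m) - lam + (yn + ynm) / 2 + ((m : ℝ) - 1) * lam)
              (Cm - ((m : ℝ) - 1) * lam + ynm + ((m : ℝ) - 1) * lam) := by
          rw [g4]; congr 1 <;> ring
        rw [min_add_add_right] at h'
        exact add_right_cancel h'
  refine ⟨main, ?_⟩
  constructor
  · rintro ⟨y1, yn, yn1, ynm, hy⟩
    exact ⟨_, _, _, _, (main y1 yn yn1 ynm).mp hy⟩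
  · rintro ⟨z1, zn, zn1, znm, hz⟩
    refine ⟨z1 - ((m : ℝ) - 1) * lam, zn, zn1 - ((m : ℝ) - 1) * lam,
      znm - (2 * (m : ℝ) - 2) * lam, ?_⟩
    rw [main]
    have e1 : z1 - ((m : ℝ) - 1) * lam + ((m : ℝ) - 1) * lam = z1 := by ring
    have e2 : zn1 - ((m : ℝ) - 1) * lam + ((m : ℝ) - 1) * lam = zn1 := by ring
    have e3 : znm - (2 * (m : ℝ) - 2) * lam + (2 * (m : ℝ) - 2) * lam = znm := by ring
    rw [e1, e2, e3]
    exact hz
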